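/- arXiv:1610.07396 — 5 statements merged into one kernel-verified Lean document; each statement's English description precedes it below -/
import Mathlib

section
/- The function d : C(M) × C(M) → ℝ defined by d(A,B) = ∫₀^∞ e^{-R} d_R(A,B) dR is a metric on C(M), and the topology it induces on C(M) coincides with the Chabauty topology. -/
open Metric Filter Set Topology

/-- The space of closed subsets of `M`. -/
abbrev ClosedSubsets (M : Type*) [MetricSpace M] := {A : Set M // IsClosed A}

/-- The truncated Hausdorff pseudo-distance `d_R(A,B) = min {1, d_Haus(A_R, B_R)}`,
where `A_R = A ∩ closedBall p R`, with the convention that the Hausdorff distance between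
the empty set and a nonempty set is `+∞` (so the truncation gives `1`), and between two
empty sets is `0`. -/
noncomputable def dR {M : Type*} [MetricSpace M] (p : M) (R : ℝ) (A B : Set M) : ℝ :=
  (min 1 (EMetric.hausdorffEdist (A ∩ closedBall p R) (B ∩ closedBall p R))).toReal

/-- `d(A,B) = ∫₀^∞ e^{-R} d_R(A,B) dR`. -/
noncomputable def dChab {M : Type*} [MetricSpace M] (p : M) (A B : Set M) : ℝ :=
  ∫ R in Ioi (0 : ℝ), Real.exp (-R) * dR p R A B

/-- The Chabauty topology on the space of closed subsets of `M`, generated by the sets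
`{C | C ∩ K = ∅}` for `K` compact and `{C | C ∩ U ≠ ∅}` for `U` open. -/
def Chabauty (M : Type*) [MetricSpace M] : TopologicalSpace (ClosedSubsets M) :=
  TopologicalSpace.generateFrom
    ({S | ∃ K : Set M, IsCompact K ∧ S = {C : ClosedSubsets M | C.1 ∩ K = ∅}} ∪
     {S | ∃ U : Set M, IsOpen U ∧ S = {C : ClosedSubsets M | (C.1 ∩ U).Nonempty}})

/-!
For each `R`, `d_R` is a pseudometric bounded by `1`, and `R ↦ d_R(A,B)` is right-continuous
(the truncations `A ∩ closedBall p R` of a closed set in a proper space vary right-continuously in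
the Hausdorff metric), hence measurable; so `d` is a pseudometric. A point `x ∈ A` at distance
`ε ≤ 1` from `B` forces `d_R(A,B) ≥ ε` for all `R > dist p x`, so `d(A,B) ≥ ε e^{-dist p x}`:
this separates distinct closed sets and makes the Chabauty subbasic sets `d`-open.

Conversely, let `B` avoid the compact set `closedBall p R \ thickening δ A` and meet the balls of
a fine net of `A ∩ closedBall p R`. Then `d_r(A,B) ≤ η + δ` for every `r ≤ R` at which both
`A_r` and `A_{r+δ}` lie within `η` of the smaller truncation `A_{r-δ}`, resp. `A_r`. A radius
where this fails lies within `δ` of the first radius at which `A` enters one of finitely many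
`η/2`-balls covering `closedBall p (R + 1)`, so the bad radii have measure `O(δ)`, and
`d(A,B) ≤ η + O(δ) + e^{-R}`.
-/

open ENNReal MeasureTheory

lemma ENNReal.min_one_add_le (x y : ℝ≥0∞) : min 1 (x + y) ≤ min 1 x + min 1 y := by
  rcases le_total 1 x with hx | hx
  · exact (min_le_left _ _).trans (by simp [hx])
  rcases le_total 1 y with hy | hy
  · exact (min_le_left _ _).trans (by simp [hy])
  · simp [hx, hy]

lemma ENNReal.min_one_ne_top (x : ℝ≥0∞) : min 1 x ≠ ∞ :=
  ne_top_of_le_ne_top one_ne_top (min_le_left _ _)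

lemma volume_biUnion_Icc_le {ι : Type*} (D : Finset ι) (t : ι → ℝ) (δ : ℝ) :
    volume (⋃ c ∈ D, Icc (t c - δ) (t c + δ)) ≤ ENNReal.ofReal (2 * δ * D.card) := by
  refine (measure_biUnion_finset_le D _).trans ?_
  simp only [Real.volume_Icc, add_sub_sub_cancel, Finset.sum_const, nsmul_eq_mul]
  rw [← ENNReal.ofReal_natCast, ← ENNReal.ofReal_mul (by positivity)]
  exact ENNReal.ofReal_le_ofReal (by linarith)

lemma measurable_of_continuousWithinAt_Ici {β : Type*} [TopologicalSpace β]
    [TopologicalSpace.PseudoMetrizableSpace β] [MeasurableSpace β] [BorelSpace β] {f : ℝ → β}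
    (hf : ∀ x, ContinuousWithinAt f (Ici x) x) : Measurable f := by
  let u : ℕ → ℝ → ℝ := fun n x => ⌈x * (n + 1)⌉ / (n + 1)
  have hu_ge : ∀ n x, x ≤ u n x := fun n x => by
    rw [le_div_iff₀ (by positivity)]; exact Int.le_ceil _
  have hu_le : ∀ n x, u n x ≤ x + 1 / (n + 1) := fun n x => by
    rw [div_le_iff₀ (by positivity), add_mul, one_div_mul_cancel (by positivity)]
    exact (Int.ceil_lt_add_one _).le
  refine measurable_of_tendsto_metrizable (f := fun n x => f (u n x)) (fun n => ?_) ?_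
  · exact (measurable_of_countable fun k : ℤ => f (k / (n + 1))).comp
      (Int.measurable_ceil.comp (measurable_id.mul_const _))
  refine tendsto_pi_nhds.2 fun x => (hf x).tendsto.comp ?_
  refine tendsto_nhdsWithin_of_tendsto_nhds_of_eventually_within _ ?_ (.of_forall (hu_ge · x))
  refine tendsto_of_tendsto_of_tendsto_of_le_of_le tendsto_const_nhds ?_ (hu_ge · x) (hu_le · x)
  simpa using (tendsto_const_nhds (x := x)).add (tendsto_one_div_add_atTop_nhds_zero_nat (𝕜 := ℝ))

section TruncHausdorff

variable {M : Type*} [MetricSpace M] {s t u s' t' : Set M}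

noncomputable def truncHausdorffDist (s t : Set M) : ℝ :=
  (min 1 (hausdorffEDist s t)).toReal

lemma dR_eq_truncHausdorffDist (p : M) (R : ℝ) (A B : Set M) :
    dR p R A B = truncHausdorffDist (A ∩ closedBall p R) (B ∩ closedBall p R) := rfl

lemma truncHausdorffDist_nonneg : 0 ≤ truncHausdorffDist s t := ENNReal.toReal_nonneg

lemma truncHausdorffDist_le_one : truncHausdorffDist s t ≤ 1 := by
  simpa [truncHausdorffDist] using
    ENNReal.toReal_mono one_ne_top (min_le_left 1 (hausdorffEDist s t))

@[simp] lemma truncHausdorffDist_self : truncHausdorffDist s s = 0 := by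
  simp [truncHausdorffDist]

lemma truncHausdorffDist_comm : truncHausdorffDist s t = truncHausdorffDist t s := by
  rw [truncHausdorffDist, truncHausdorffDist, hausdorffEDist_comm]

lemma truncHausdorffDist_triangle :
    truncHausdorffDist s u ≤ truncHausdorffDist s t + truncHausdorffDist t u := by
  rw [truncHausdorffDist, truncHausdorffDist, truncHausdorffDist,
    ← ENNReal.toReal_add (ENNReal.min_one_ne_top _) (ENNReal.min_one_ne_top _)]
  refine ENNReal.toReal_mono (by simp) ?_
  exact (min_le_min le_rfl hausdorffEDist_triangle).trans (ENNReal.min_one_add_le _ _)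

lemma abs_truncHausdorffDist_sub_le :
    |truncHausdorffDist s t - truncHausdorffDist s' t'| ≤
      truncHausdorffDist s s' + truncHausdorffDist t t' := by
  have h₁ := truncHausdorffDist_triangle (s := s) (t := s') (u := t)
  have h₂ := truncHausdorffDist_triangle (s := s') (t := t') (u := t)
  have h₃ := truncHausdorffDist_triangle (s := s') (t := s) (u := t')
  have h₄ := truncHausdorffDist_triangle (s := s) (t := t) (u := t')
  rw [truncHausdorffDist_comm (s := t') (t := t)] at h₂
  rw [truncHausdorffDist_comm (s := s') (t := s)] at h₃
  rw [abs_sub_le_iff]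
  constructor <;> linarith

lemma truncHausdorffDist_le_of_hausdorffEDist_le {ε : ℝ} (hε : 0 ≤ ε)
    (h : hausdorffEDist s t ≤ ENNReal.ofReal ε) : truncHausdorffDist s t ≤ ε :=
  (ENNReal.toReal_mono ofReal_ne_top ((min_le_right _ _).trans h)).trans_eq
    (ENNReal.toReal_ofReal hε)

lemma le_truncHausdorffDist_of_le_infEDist {x : M} {ε : ℝ} (hε : 0 ≤ ε) (hε₁ : ε ≤ 1)
    (hx : x ∈ s) (h : ENNReal.ofReal ε ≤ infEDist x t) : ε ≤ truncHausdorffDist s t := by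
  have : ENNReal.ofReal ε ≤ min 1 (hausdorffEDist s t) :=
    le_min (ENNReal.ofReal_le_one.2 hε₁) (h.trans (infEDist_le_hausdorffEDist_of_mem hx))
  simpa [truncHausdorffDist, ENNReal.toReal_ofReal hε] using
    ENNReal.toReal_mono (ENNReal.min_one_ne_top _) this

end TruncHausdorff

section RightContinuity

variable {M : Type*} [MetricSpace M] [ProperSpace M] (p : M) {A B : Set M}

lemma exists_gt_inter_closedBall_subset_thickening (hA : IsClosed A) (r₀ : ℝ) {ε : ℝ}
    (hε : 0 < ε) : ∃ r₁ > r₀, A ∩ closedBall p r₁ ⊆ thickening ε (A ∩ closedBall p r₀) := by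
  have : Nonempty (Ioi r₀) := ⟨⟨r₀ + 1, by simp⟩⟩
  have hinter : ⋂ r : Ioi r₀, A ∩ closedBall p r ⊆ A ∩ closedBall p r₀ := fun x hx =>
    ⟨(mem_iInter.1 hx ⟨r₀ + 1, by simp⟩).1, mem_closedBall.2 <|
      le_of_forall_gt_imp_ge_of_dense fun r hr => (mem_iInter.1 hx ⟨r, hr⟩).2⟩
  obtain ⟨⟨r₁, hr₁⟩, h⟩ := exists_subset_nhds_of_isCompact'
    (V := fun r : Ioi r₀ => A ∩ closedBall p r)
    (fun r r' => ⟨⟨min r r', lt_min r.2.out r'.2.out⟩,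
      inter_subset_inter_right _ (closedBall_subset_closedBall (min_le_left _ _)),
      inter_subset_inter_right _ (closedBall_subset_closedBall (min_le_right _ _))⟩)
    (fun r => (isCompact_closedBall p r).inter_left hA) (fun r => hA.inter isClosed_closedBall)
    (fun x hx => isOpen_thickening.mem_nhds (self_subset_thickening hε _ (hinter hx)))
  exact ⟨r₁, hr₁, h⟩

lemma tendsto_truncHausdorffDist_inter_closedBall (hA : IsClosed A) (r₀ : ℝ) :
    Tendsto (fun r => truncHausdorffDist (A ∩ closedBall p r) (A ∩ closedBall p r₀))
      (𝓝[≥] r₀) (𝓝 0) := by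
  refine tendsto_order.2 ⟨fun a ha => .of_forall fun r => ha.trans_le truncHausdorffDist_nonneg,
    fun ε hε => ?_⟩
  obtain ⟨r₁, hr₁, hsub⟩ := exists_gt_inter_closedBall_subset_thickening p hA r₀ (half_pos hε)
  filter_upwards [Ico_mem_nhdsGE hr₁] with r hr
  refine (truncHausdorffDist_le_of_hausdorffEDist_le (half_pos hε).le ?_).trans_lt (half_lt_self hε)
  refine hausdorffEDist_le_of_mem_edist (fun x hx => ?_) (fun x hx => ?_)
  · obtain ⟨z, hz, hxz⟩ :=
      mem_thickening_iff.1 (hsub ⟨hx.1, closedBall_subset_closedBall hr.2.le hx.2⟩)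
    exact ⟨z, hz, by rw [edist_dist]; exact ENNReal.ofReal_le_ofReal hxz.le⟩
  · exact ⟨x, ⟨hx.1, closedBall_subset_closedBall hr.1 hx.2⟩, by simp⟩

lemma continuousWithinAt_dR_Ici (hA : IsClosed A) (hB : IsClosed B) (r₀ : ℝ) :
    ContinuousWithinAt (fun r => dR p r A B) (Ici r₀) r₀ := by
  have h := (tendsto_truncHausdorffDist_inter_closedBall p hA r₀).add
    (tendsto_truncHausdorffDist_inter_closedBall p hB r₀)
  rw [add_zero] at h
  exact tendsto_iff_dist_tendsto_zero.2 <|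
    squeeze_zero (fun _ => dist_nonneg) (fun _ => abs_truncHausdorffDist_sub_le) h

end RightContinuity

section ChabautyDist

variable {M : Type*} [MetricSpace M] (p : M) {A B C : Set M}

lemma dR_nonneg (r : ℝ) : 0 ≤ dR p r A B := truncHausdorffDist_nonneg

lemma exp_neg_mul_dR_le (r : ℝ) : Real.exp (-r) * dR p r A B ≤ Real.exp (-r) :=
  mul_le_of_le_one_right (Real.exp_pos _).le truncHausdorffDist_le_one

lemma dChab_self : dChab p A A = 0 := by
  simp only [dChab, dR_eq_truncHausdorffDist, truncHausdorffDist_self, mul_zero, integral_zero]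

lemma dChab_comm : dChab p A B = dChab p B A := by
  simp only [dChab, dR_eq_truncHausdorffDist, truncHausdorffDist_comm]

variable [ProperSpace M]

lemma measurable_dR (hA : IsClosed A) (hB : IsClosed B) : Measurable fun r => dR p r A B :=
  measurable_of_continuousWithinAt_Ici (continuousWithinAt_dR_Ici p hA hB)

lemma integrableOn_exp_neg_mul_dR (hA : IsClosed A) (hB : IsClosed B) (s : Set ℝ) (a : ℝ)
    (hs : s ⊆ Ioi a) : IntegrableOn (fun r => Real.exp (-r) * dR p r A B) s := by
  refine Integrable.mono ((integrableOn_exp_neg_Ioi a).mono_set hs)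
    ((Real.measurable_exp.comp measurable_neg).mul (measurable_dR p hA hB)).aestronglyMeasurable
    (.of_forall fun r => ?_)
  rw [Real.norm_of_nonneg (mul_nonneg (Real.exp_pos _).le (dR_nonneg p r)),
    Real.norm_of_nonneg (Real.exp_pos _).le]
  exact exp_neg_mul_dR_le p r

lemma dChab_triangle (hA : IsClosed A) (hB : IsClosed B) (hC : IsClosed C) :
    dChab p A C ≤ dChab p A B + dChab p B C := by
  have hAB := integrableOn_exp_neg_mul_dR p hA hB _ 0 subset_rfl
  have hBC := integrableOn_exp_neg_mul_dR p hB hC _ 0 subset_rfl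
  rw [dChab, dChab, dChab, ← integral_add hAB hBC]
  refine setIntegral_mono_on (integrableOn_exp_neg_mul_dR p hA hC _ 0 subset_rfl)
    (hAB.add hBC) measurableSet_Ioi fun r _ => ?_
  rw [← mul_add]
  exact mul_le_mul_of_nonneg_left truncHausdorffDist_triangle (Real.exp_pos _).le

lemma mul_exp_neg_dist_le_dChab (hA : IsClosed A) (hB : IsClosed B) {x : M} {ε : ℝ}
    (hx : x ∈ A) (hε : 0 ≤ ε) (hε₁ : ε ≤ 1) (hsep : ∀ b ∈ B, ε ≤ dist x b) :
    ε * Real.exp (-dist p x) ≤ dChab p A B := by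
  have hdR : ∀ r ∈ Ioi (dist p x), ε ≤ dR p r A B := fun r hr =>
    le_truncHausdorffDist_of_le_infEDist hε hε₁
      ⟨hx, mem_closedBall'.2 (le_of_lt hr)⟩
      (le_infEDist.2 fun b hb => by rw [edist_dist]; exact ENNReal.ofReal_le_ofReal (hsep b hb.1))
  calc ε * Real.exp (-dist p x) = ∫ r in Ioi (dist p x), ε * Real.exp (-r) := by
        rw [integral_const_mul, integral_exp_neg_Ioi]
    _ ≤ ∫ r in Ioi (dist p x), Real.exp (-r) * dR p r A B :=
        setIntegral_mono_on ((integrableOn_exp_neg_Ioi _).const_mul ε)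
          (integrableOn_exp_neg_mul_dR p hA hB _ _ subset_rfl) measurableSet_Ioi fun r hr => by
            rw [mul_comm]; exact mul_le_mul_of_nonneg_left (hdR r hr) (Real.exp_pos _).le
    _ ≤ dChab p A B :=
        setIntegral_mono_set (integrableOn_exp_neg_mul_dR p hA hB _ 0 subset_rfl)
          (.of_forall fun r => mul_nonneg (Real.exp_pos _).le (dR_nonneg p r))
          (.of_forall (Ioi_subset_Ioi dist_nonneg))

lemma subset_of_dChab_eq_zero (hA : IsClosed A) (hB : IsClosed B) (h : dChab p A B = 0) :
    A ⊆ B := by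
  intro x hx
  by_contra hxB
  obtain ⟨η, hη, hball⟩ := Metric.isOpen_iff.1 hB.isOpen_compl x hxB
  have hsep : ∀ b ∈ B, min 1 η ≤ dist x b := fun b hb =>
    (min_le_right _ _).trans (not_lt.1 fun hlt => hball (mem_ball'.2 hlt) hb)
  have := mul_exp_neg_dist_le_dChab p hA hB hx (by positivity) (min_le_left _ _) hsep
  rw [h] at this
  exact (mul_pos (lt_min one_pos hη) (Real.exp_pos _)).not_ge this

lemma exists_forall_dChab_lt_inter_eq_empty (hA : IsClosed A) {K : Set M} (hK : IsCompact K)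
    (hAK : A ∩ K = ∅) : ∃ ε > 0, ∀ B, IsClosed B → dChab p A B < ε → B ∩ K = ∅ := by
  obtain ⟨δ, hδ, hthick⟩ := hK.exists_thickening_subset_open hA.isOpen_compl
    fun x hxK hxA => hAK.subset ⟨hxA, hxK⟩
  obtain ⟨r, hr⟩ := hK.isBounded.subset_closedBall p
  refine ⟨min 1 δ * Real.exp (-r), by positivity, fun B hB hlt => ?_⟩
  by_contra hne
  obtain ⟨b, hbB, hbK⟩ := nonempty_iff_ne_empty.2 hne
  have hsep : ∀ a ∈ A, min 1 δ ≤ dist b a := fun a ha =>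
    (min_le_right _ _).trans <| not_lt.1 fun hlt =>
      hthick (mem_thickening_iff.2 ⟨b, hbK, by rwa [dist_comm]⟩) ha
  have hlow := mul_exp_neg_dist_le_dChab p hB hA hbB (by positivity) (min_le_left _ _) hsep
  have hexp : Real.exp (-r) ≤ Real.exp (-dist p b) :=
    Real.exp_le_exp.2 (neg_le_neg (mem_closedBall'.1 (hr hbK)))
  rw [dChab_comm] at hlow
  nlinarith [lt_min one_pos hδ]

lemma exists_forall_dChab_lt_inter_nonempty (hA : IsClosed A) {U : Set M} (hU : IsOpen U)
    (hAU : (A ∩ U).Nonempty) : ∃ ε > 0, ∀ B, IsClosed B → dChab p A B < ε → (B ∩ U).Nonempty := by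
  obtain ⟨x, hxA, hxU⟩ := hAU
  obtain ⟨η, hη, hball⟩ := Metric.isOpen_iff.1 hU x hxU
  refine ⟨min 1 η * Real.exp (-dist p x), by positivity, fun B hB hlt => ?_⟩
  by_contra hempty
  have hsep : ∀ b ∈ B, min 1 η ≤ dist x b := fun b hb =>
    (min_le_right _ _).trans <| not_lt.1 fun hlt => hempty ⟨b, hb, hball (mem_ball'.2 hlt)⟩
  exact hlt.not_ge (mul_exp_neg_dist_le_dChab p hA hB hxA (by positivity) (min_le_left _ _) hsep)

end ChabautyDist

section HardDirection

variable {M : Type*} [MetricSpace M] (p : M) {A B : Set M}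

def ShellClose (p : M) (A : Set M) (h η s : ℝ) : Prop :=
  ∀ a ∈ A ∩ closedBall p s, ∃ a' ∈ A ∩ closedBall p (s - h), dist a a' ≤ η

/-- `infDist p (A ∩ ball c (η / 2))` is the radius at which `A` first enters `ball c (η / 2)`,
and any two points of `A` in that ball are `η`-close. -/
lemma subset_iUnion_Icc_of_not_shellClose {D : Finset M} {ρ η h : ℝ}
    (hD : closedBall p ρ ⊆ ⋃ c ∈ D, ball c (η / 2)) :
    {s | s ≤ ρ ∧ ¬ ShellClose p A h η s} ⊆
      ⋃ c ∈ D, Icc (infDist p (A ∩ ball c (η / 2))) (infDist p (A ∩ ball c (η / 2)) + h) := by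
  rintro s ⟨hsρ, hs⟩
  simp only [ShellClose, not_forall, not_exists, not_and, not_le] at hs
  obtain ⟨a, ⟨haA, has⟩, hfar⟩ := hs
  obtain ⟨c, hc, hac⟩ := mem_iUnion₂.1 (hD (closedBall_subset_closedBall hsρ has))
  have haT : a ∈ A ∩ ball c (η / 2) := ⟨haA, hac⟩
  refine mem_iUnion₂.2 ⟨c, hc, (infDist_le_dist_of_mem haT).trans (mem_closedBall'.1 has), ?_⟩
  rw [← sub_le_iff_le_add, le_infDist ⟨a, haT⟩]
  rintro y ⟨hyA, hyc⟩
  by_contra! hy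
  have := hfar y ⟨hyA, mem_closedBall'.2 hy.le⟩
  linarith [dist_triangle_right a y c, mem_ball.1 hac, mem_ball.1 hyc]

lemma dR_le_of_shellClose {r δ η : ℝ} (hδ : 0 ≤ δ) (hη : 0 ≤ η)
    (h₁ : ∀ b ∈ B ∩ closedBall p r, ∃ a ∈ A, dist b a < δ)
    (h₂ : ∀ a ∈ A ∩ closedBall p r, ∃ b ∈ B, dist a b < δ)
    (hr : ShellClose p A δ η r) (hr' : ShellClose p A δ η (r + δ)) :
    dR p r A B ≤ η + δ := by
  refine truncHausdorffDist_le_of_hausdorffEDist_le (by positivity) <|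
    hausdorffEDist_le_of_mem_edist (fun x hx => ?_) (fun y hy => ?_)
  · obtain ⟨a, ⟨haA, har⟩, hxa⟩ := hr x hx
    have har' : dist a p ≤ r - δ := mem_closedBall.1 har
    obtain ⟨b, hbB, hab⟩ := h₂ a ⟨haA, closedBall_subset_closedBall (by linarith) har⟩
    refine ⟨b, ⟨hbB, mem_closedBall.2 ?_⟩, ?_⟩
    · linarith [dist_triangle_left b p a]
    · rw [edist_dist]
      exact ENNReal.ofReal_le_ofReal (by linarith [dist_triangle x a b])
  · obtain ⟨a, haA, hya⟩ := h₁ y hy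
    have hay : dist a p ≤ r + δ := by
      linarith [dist_triangle_left a p y, mem_closedBall.1 hy.2]
    obtain ⟨a', ha', haa'⟩ := hr' a ⟨haA, mem_closedBall.2 hay⟩
    rw [add_sub_cancel_right] at ha'
    refine ⟨a', ha', ?_⟩
    rw [edist_dist]
    exact ENNReal.ofReal_le_ofReal (by linarith [dist_triangle y a a'])

variable [ProperSpace M]

lemma dChab_le_of_dR_le (hA : IsClosed A) (hB : IsClosed B) {S : Set ℝ} (hS : MeasurableSet S)
    (hSfin : volume S ≠ ∞) {R θ : ℝ} (hR : 0 ≤ R) (hθ : 0 ≤ θ)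
    (h : ∀ r ∈ Ioc 0 R, r ∉ S → dR p r A B ≤ θ) :
    dChab p A B ≤ θ + volume.real S + Real.exp (-R) := by
  set g₁ : ℝ → ℝ := fun r => θ * Real.exp (-r)
  set g₂ : ℝ → ℝ := S.indicator 1
  set g₃ : ℝ → ℝ := (Ioi R).indicator fun r => Real.exp (-r)
  have hg₁ : IntegrableOn g₁ (Ioi 0) := (integrableOn_exp_neg_Ioi 0).const_mul θ
  have hg₂ : IntegrableOn g₂ (Ioi 0) :=
    (integrable_indicator_iff hS).2 (integrableOn_const
      (ne_top_of_le_ne_top hSfin (Measure.restrict_apply_le _ _)))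
  have hg₃ : IntegrableOn g₃ (Ioi 0) :=
    (integrable_indicator_iff measurableSet_Ioi).2 ((integrableOn_exp_neg_Ioi R).restrict)
  have hbound : ∀ r ∈ Ioi (0 : ℝ), Real.exp (-r) * dR p r A B ≤ g₁ r + g₂ r + g₃ r := by
    intro r hr
    have h₁ : 0 ≤ g₁ r := by positivity
    have h₂ : 0 ≤ g₂ r := indicator_nonneg (fun _ _ => zero_le_one) r
    have h₃ : 0 ≤ g₃ r := indicator_nonneg (fun _ _ => (Real.exp_pos _).le) r
    by_cases hrS : r ∈ S
    · have : g₂ r = 1 := indicator_of_mem hrS _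
      have := (exp_neg_mul_dR_le p (A := A) (B := B) r).trans
        (Real.exp_le_one_iff.2 (neg_nonpos.2 (le_of_lt hr)))
      linarith
    by_cases hrR : r ≤ R
    · have : Real.exp (-r) * dR p r A B ≤ g₁ r := by
        rw [mul_comm]; exact mul_le_mul_of_nonneg_right (h r ⟨hr, hrR⟩ hrS) (Real.exp_pos _).le
      linarith
    · have : g₃ r = Real.exp (-r) := indicator_of_mem (not_le.1 hrR) _
      linarith [exp_neg_mul_dR_le p (A := A) (B := B) r]
  calc dChab p A B ≤ ∫ r in Ioi 0, (g₁ r + g₂ r + g₃ r) :=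
        setIntegral_mono_on (integrableOn_exp_neg_mul_dR p hA hB _ 0 subset_rfl)
          ((hg₁.add hg₂).add hg₃) measurableSet_Ioi hbound
    _ = θ + (volume.restrict (Ioi 0)).real S + Real.exp (-R) := by
        rw [integral_add (f := fun r => g₁ r + g₂ r) (hg₁.add hg₂) hg₃, integral_add hg₁ hg₂,
          integral_const_mul, integral_exp_neg_Ioi_zero, mul_one, integral_indicator_one hS,
          integral_indicator measurableSet_Ioi, Measure.restrict_restrict measurableSet_Ioi, inter_eq_left.2 (Ioi_subset_Ioi hR),
          integral_exp_neg_Ioi]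
    _ ≤ θ + volume.real S + Real.exp (-R) := by
        gcongr
        rw [measureReal_restrict_apply hS]
        exact measureReal_mono inter_subset_left hSfin

lemma dChab_le_of_forall_dist_lt (hA : IsClosed A) (hB : IsClosed B) {R δ η : ℝ} (hR : 0 ≤ R)
    (hδ : 0 ≤ δ) (hδ₁ : δ ≤ 1) (hη : 0 ≤ η) {D : Finset M}
    (hD : closedBall p (R + 1) ⊆ ⋃ c ∈ D, ball c (η / 2))
    (h₁ : ∀ b ∈ B ∩ closedBall p R, ∃ a ∈ A, dist b a < δ)
    (h₂ : ∀ a ∈ A ∩ closedBall p R, ∃ b ∈ B, dist a b < δ) :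
    dChab p A B ≤ η + δ + 2 * δ * D.card + Real.exp (-R) := by
  set t : M → ℝ := fun c => infDist p (A ∩ ball c (η / 2))
  set S := ⋃ c ∈ D, Icc (t c - δ) (t c + δ)
  have hSvol := volume_biUnion_Icc_le D t δ
  have hSfin : volume S ≠ ∞ := ne_top_of_le_ne_top ofReal_ne_top hSvol
  have hshell : ∀ r s, r ∉ S → r ≤ s → s ≤ r + δ → s ≤ R + 1 → ShellClose p A δ η s := by
    intro r s hrS hrs hsr hsR
    by_contra hs
    obtain ⟨c, hc, hsc⟩ := mem_iUnion₂.1 (subset_iUnion_Icc_of_not_shellClose p hD ⟨hsR, hs⟩)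
    exact hrS (mem_iUnion₂.2 ⟨c, hc, by linarith [hsc.1], by linarith [hsc.2]⟩)
  have hdR : ∀ r ∈ Ioc 0 R, r ∉ S → dR p r A B ≤ η + δ := fun r hr hrS =>
    dR_le_of_shellClose p hδ hη
      (fun b hb => h₁ b ⟨hb.1, closedBall_subset_closedBall hr.2 hb.2⟩)
      (fun a ha => h₂ a ⟨ha.1, closedBall_subset_closedBall hr.2 ha.2⟩)
      (hshell r r hrS le_rfl (by linarith) (by linarith [hr.2]))
      (hshell r (r + δ) hrS (by linarith) le_rfl (by linarith [hr.2]))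
  have := dChab_le_of_dR_le p hA hB
    (D.measurableSet_biUnion fun c _ => measurableSet_Icc) hSfin hR (by positivity) hdR
  have hSreal : volume.real S ≤ 2 * δ * D.card :=
    (ENNReal.toReal_mono ofReal_ne_top hSvol).trans_eq (ENNReal.toReal_ofReal (by positivity))
  linarith

lemma exists_chabauty_nbhd_subset_dChab_lt (hA : IsClosed A) {ε : ℝ} (hε : 0 < ε) :
    ∃ K, IsCompact K ∧ A ∩ K = ∅ ∧ ∃ F : Finset M, ↑F ⊆ A ∧ ∃ δ > 0, ∀ B, IsClosed B →
      B ∩ K = ∅ → (∀ c ∈ F, (B ∩ ball c δ).Nonempty) → dChab p A B < ε := by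
  obtain ⟨R, hRε, hR⟩ := ((Real.tendsto_exp_neg_atTop_nhds_zero.eventually
    (gt_mem_nhds (by positivity : 0 < ε / 4))).and (eventually_ge_atTop 0)).exists
  obtain ⟨D, -, hDfin, hD⟩ := finite_cover_balls_of_compact (isCompact_closedBall p (R + 1))
    (by positivity : 0 < ε / 4 / 2)
  lift D to Finset M using hDfin
  set δ := min 1 (ε / (4 * (2 * D.card + 1)))
  have hδ : 0 < δ := lt_min one_pos (by positivity)
  have hδε : δ * (2 * D.card + 1) ≤ ε / 4 := by
    rw [← le_div_iff₀ (by positivity), div_div]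
    exact min_le_right _ _
  obtain ⟨F, hFA, hFfin, hF⟩ := finite_cover_balls_of_compact
    ((isCompact_closedBall p R).inter_left hA) (half_pos hδ)
  lift F to Finset M using hFfin
  refine ⟨closedBall p R \ thickening δ A, (isCompact_closedBall p R).diff isOpen_thickening,
    ?_, F, fun c hc => (hFA hc).1, δ / 2, half_pos hδ, fun B hB hBK hBF => ?_⟩
  · exact eq_empty_iff_forall_notMem.2 fun x ⟨hxA, _, hx⟩ => hx (self_subset_thickening hδ A hxA)
  have h₁ : ∀ b ∈ B ∩ closedBall p R, ∃ a ∈ A, dist b a < δ := fun b ⟨hbB, hbR⟩ => by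
    by_contra hfar
    exact hBK.subset ⟨hbB, hbR, fun hb => hfar (mem_thickening_iff.1 hb)⟩
  have h₂ : ∀ a ∈ A ∩ closedBall p R, ∃ b ∈ B, dist a b < δ := fun a ha => by
    obtain ⟨c, hc, hac⟩ := mem_iUnion₂.1 (hF ha)
    obtain ⟨b, hbB, hbc⟩ := hBF c hc
    exact ⟨b, hbB, by linarith [dist_triangle_right a b c, mem_ball.1 hac, mem_ball.1 hbc]⟩
  have := dChab_le_of_forall_dist_lt p hA hB hR hδ.le (min_le_left _ _) (by positivity) hD h₁ h₂
  linarith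

end HardDirection

section Chabauty

variable {M : Type*} [MetricSpace M]

lemma isOpen_chabauty_inter_eq_empty {K : Set M} (hK : IsCompact K) :
    IsOpen[Chabauty M] {C | C.1 ∩ K = ∅} :=
  .basic _ (.inl ⟨K, hK, rfl⟩)

lemma isOpen_chabauty_inter_nonempty {U : Set M} (hU : IsOpen U) :
    IsOpen[Chabauty M] {C | (C.1 ∩ U).Nonempty} :=
  .basic _ (.inr ⟨U, hU, rfl⟩)

variable [ProperSpace M] (p : M)

lemma setOf_dChab_lt_mem_nhds_chabauty (A : ClosedSubsets M) {ε : ℝ} (hε : 0 < ε) :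
    {B : ClosedSubsets M | dChab p A.1 B.1 < ε} ∈ @nhds _ (Chabauty M) A := by
  let := Chabauty M
  obtain ⟨K, hK, hAK, F, hFA, δ, hδ, hsub⟩ := exists_chabauty_nbhd_subset_dChab_lt p A.2 hε
  have hopen : IsOpen ({B : ClosedSubsets M | B.1 ∩ K = ∅} ∩
      ⋂ c ∈ F, {B : ClosedSubsets M | (B.1 ∩ ball c δ).Nonempty}) :=
    (isOpen_chabauty_inter_eq_empty hK).inter <|
      isOpen_biInter_finset fun c _ => isOpen_chabauty_inter_nonempty isOpen_ball
  refine Filter.mem_of_superset (hopen.mem_nhds ⟨hAK, mem_iInter₂.2 fun c hc => ?_⟩)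
    fun B hB => hsub B.1 B.2 hB.1 (mem_iInter₂.1 hB.2)
  exact ⟨c, hFA hc, mem_ball_self hδ⟩

noncomputable abbrev chabautyMetric : MetricSpace (ClosedSubsets M) where
  dist A B := dChab p A.1 B.1
  dist_self _ := dChab_self p
  dist_comm _ _ := dChab_comm p
  dist_triangle A B C := dChab_triangle p A.2 B.2 C.2
  eq_of_dist_eq_zero {A B} h := Subtype.ext <| subset_antisymm
    (subset_of_dChab_eq_zero p A.2 B.2 h)
    (subset_of_dChab_eq_zero p B.2 A.2 ((dChab_comm p).trans h))

end Chabauty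

/-- The function `d(A,B) = ∫₀^∞ e^{-R} d_R(A,B) dR` is a metric on the space of closed
subsets of a proper metric space `M`, and the topology it induces coincides with the
Chabauty topology. -/
theorem chabauty_metric (M : Type*) [MetricSpace M] [ProperSpace M] (p : M) :
    ∃ m : MetricSpace (ClosedSubsets M),
      (∀ A B : ClosedSubsets M, @dist _ m.toDist A B = dChab p A.1 B.1) ∧
      m.toUniformSpace.toTopologicalSpace = Chabauty M := by
  let := chabautyMetric p
  refine ⟨chabautyMetric p, fun _ _ => rfl, le_antisymm ?_ ?_⟩
  · refine le_generateFrom fun s hs => Metric.isOpen_iff.2 ?_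
    rcases hs with ⟨K, hK, rfl⟩ | ⟨U, hU, rfl⟩
    · intro A hA
      obtain ⟨ε, hε, h⟩ := exists_forall_dChab_lt_inter_eq_empty p A.2 hK hA
      exact ⟨ε, hε, fun B hB => h B.1 B.2 (mem_ball'.1 hB)⟩
    · intro A hA
      obtain ⟨ε, hε, h⟩ := exists_forall_dChab_lt_inter_nonempty p A.2 hU hA
      exact ⟨ε, hε, fun B hB => h B.1 B.2 (mem_ball'.1 hB)⟩
  · refine le_of_nhds_le_nhds fun A => Metric.nhds_basis_ball.ge_iff.2 fun ε hε => ?_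
    exact Filter.mem_of_superset (setOf_dChab_lt_mem_nhds_chabauty p A hε)
      fun B hB => (dChab_comm p).trans_lt hB
end

section
/- If a sequence (C_i) in C(M) converges to C ∈ C(M) in the Chabauty topology, then the set of R > 0 for which d_R(C_i, C) does not converge to 0 is countable; in particular, d_R(C_i, C) → 0 for all but countably many R > 0. -/
open Metric Filter Set Topology

/-!
A radius `R` can only be bad if some point `x ∈ D` with `d(p, x) = R` is not a limit of points of
`D` in the open ball `B(p, R)`; a basic open set around such an `x` then meets `D` only outside
`B(p, R)`, and it cannot serve as a witness for a second such radius, so bad radii inject into a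
countable basis. At every other radius, Chabauty convergence makes `C_i ∩ B̄(p, R)` eventually
Hausdorff close to `D ∩ B̄(p, R)`: points of `C_i` far from `D` form a compact set avoiding `D`,
and each point of `D ∩ B̄(p, R)` is approximated by points of `D` in the open ball, which are
eventually approximated by points of `C_i`.
-/

open scoped ENNReal

theorem countable_setOf_not_subset_closure_preimage_Iio {X α : Type*} [TopologicalSpace X]
    [SecondCountableTopology X] [LinearOrder α] (f : X → α) (D : Set X) :
    {r : α | ¬ D ∩ f ⁻¹' Iic r ⊆ closure (D ∩ f ⁻¹' Iio r)}.Countable := by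
  set B := TopologicalSpace.countableBasis X
  have hwit : ∀ r ∈ {r : α | ¬ D ∩ f ⁻¹' Iic r ⊆ closure (D ∩ f ⁻¹' Iio r)},
      ∃ b ∈ B, ∃ x ∈ b ∩ D, f x ≤ r ∧ ∀ y ∈ b ∩ D, r ≤ f y := by
    intro r hr
    obtain ⟨x, ⟨hxD, hxr⟩, hx⟩ := not_subset.1 hr
    obtain ⟨b, hbB, hxb, hb⟩ :=
      (TopologicalSpace.isBasis_countableBasis X).exists_subset_of_mem_open hx
        isClosed_closure.isOpen_compl
    refine ⟨b, hbB, x, ⟨hxb, hxD⟩, hxr, fun y ⟨hyb, hyD⟩ => not_lt.1 fun hyr => ?_⟩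
    exact hb hyb (subset_closure ⟨hyD, hyr⟩)
  choose! g hgB hg using hwit
  refine MapsTo.countable_of_injOn hgB (fun r hr r' hr' hrr' => ?_)
    (TopologicalSpace.countable_countableBasis X)
  obtain ⟨x, hx, hxr, hr_le⟩ := hg r hr
  obtain ⟨x', hx', hx'r', hr'_le⟩ := hg r' hr'
  exact le_antisymm ((hr_le x' (hrr' ▸ hx')).trans hx'r') ((hr'_le x (hrr' ▸ hx)).trans hxr)

theorem IsCompact.eventually_forall_of_forall_eventually_prod {ι X : Type*}
    [TopologicalSpace X] {l : Filter ι} {K : Set X} (hK : IsCompact K) {P : ι → X → Prop}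
    (hP : ∀ x ∈ K, ∀ᶠ z in l ×ˢ 𝓝 x, P z.1 z.2) : ∀ᶠ i in l, ∀ x ∈ K, P i x := by
  have hPK : ∀ᶠ z in l ×ˢ 𝓝ˢ K, P z.1 z.2 := hK.mem_prod_nhdsSet_of_forall hP
  exact hPK.curry.mono fun _ h => h.self_of_nhdsSet

namespace Chabauty

variable {M ι : Type*} [MetricSpace M] {l : Filter ι} {C : ι → ClosedSubsets M}
  {D : ClosedSubsets M}

theorem eventually_inter_nonempty (h : Tendsto C l (@nhds _ (Chabauty M) D)) {U : Set M}
    (hU : IsOpen U) (hDU : (D.1 ∩ U).Nonempty) : ∀ᶠ i in l, ((C i).1 ∩ U).Nonempty :=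
  h (@IsOpen.mem_nhds _ (Chabauty M) _ _
    (TopologicalSpace.isOpen_generateFrom_of_mem (Or.inr ⟨U, hU, rfl⟩)) hDU)

theorem eventually_inter_eq_empty (h : Tendsto C l (@nhds _ (Chabauty M) D)) {K : Set M}
    (hK : IsCompact K) (hDK : D.1 ∩ K = ∅) : ∀ᶠ i in l, (C i).1 ∩ K = ∅ :=
  h (@IsOpen.mem_nhds _ (Chabauty M) _ _
    (TopologicalSpace.isOpen_generateFrom_of_mem (Or.inl ⟨K, hK, rfl⟩)) hDK)

theorem eventually_forall_infEDist_lt (h : Tendsto C l (@nhds _ (Chabauty M) D)) {K : Set M}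
    (hK : IsCompact K) {ε : ℝ≥0∞} (hε : 0 < ε) :
    ∀ᶠ i in l, ∀ z ∈ (C i).1 ∩ K, infEDist z (D.1 ∩ K) < ε := by
  set F := K ∩ {z | ε ≤ infEDist z (D.1 ∩ K)}
  have hF : IsCompact F := hK.inter_right (isClosed_le continuous_const continuous_infEDist)
  have hDF : D.1 ∩ F = ∅ := by
    refine eq_empty_iff_forall_notMem.2 fun x ⟨hxD, hxK, hxε⟩ => ?_
    have hx0 : infEDist x (D.1 ∩ K) = 0 := infEDist_zero_of_mem ⟨hxD, hxK⟩
    exact hε.not_ge (hx0 ▸ hxε)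
  filter_upwards [eventually_inter_eq_empty h hF hDF] with i hi z ⟨hzC, hzK⟩
  exact not_le.1 fun hzε => (eq_empty_iff_forall_notMem.1 hi) z ⟨hzC, hzK, hzε⟩

theorem eventually_forall_infEDist_lt_of_subset_closure
    (h : Tendsto C l (@nhds _ (Chabauty M) D)) {K V : Set M} (hK : IsCompact K) (hV : IsOpen V)
    (hVK : V ⊆ K) (hDV : D.1 ∩ K ⊆ closure (D.1 ∩ V)) {ε : ℝ≥0∞} (hε : 0 < ε) :
    ∀ᶠ i in l, ∀ x ∈ D.1 ∩ K, infEDist x ((C i).1 ∩ K) < ε := by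
  refine (hK.inter_left D.2).eventually_forall_of_forall_eventually_prod fun x hx => ?_
  have hε2 : 0 < ε / 2 := ENNReal.half_pos hε.ne'
  obtain ⟨y, hyx, hyD, hyV⟩ := mem_closure_iff.1 (hDV hx) _ isOpen_eball (mem_eball_self hε2)
  have hmeet := eventually_inter_nonempty h (hV.inter isOpen_eball) ⟨y, hyD, hyV, hyx⟩
  filter_upwards [hmeet.prod_mk (eball_mem_nhds x hε2)]
    with ⟨i, x'⟩ ⟨⟨z, hzC, hzV, hzx⟩, hx'⟩
  calc infEDist x' ((C i).1 ∩ K) ≤ edist x' z := infEDist_le_edist_of_mem ⟨hzC, hVK hzV⟩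
    _ ≤ edist x' x + edist x z := edist_triangle x' x z
    _ < ε / 2 + ε / 2 := ENNReal.add_lt_add hx' (mem_eball'.1 hzx)
    _ = ε := ENNReal.add_halves ε

theorem tendsto_hausdorffEDist_inter (h : Tendsto C l (@nhds _ (Chabauty M) D)) {K V : Set M}
    (hK : IsCompact K) (hV : IsOpen V) (hVK : V ⊆ K) (hDV : D.1 ∩ K ⊆ closure (D.1 ∩ V)) :
    Tendsto (fun i => hausdorffEDist ((C i).1 ∩ K) (D.1 ∩ K)) l (𝓝 0) := by
  refine ENNReal.tendsto_nhds_zero.2 fun ε hε => ?_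
  filter_upwards [eventually_forall_infEDist_lt h hK hε,
    eventually_forall_infEDist_lt_of_subset_closure h hK hV hVK hDV hε] with i hC hD
  exact hausdorffEDist_le_of_infEDist (fun z hz => (hC z hz).le) fun x hx => (hD x hx).le

end Chabauty

theorem tendsto_dR_of_tendsto_hausdorffEDist {M ι : Type*} [MetricSpace M] {l : Filter ι}
    {p : M} {R : ℝ} {A : ι → Set M} {B : Set M}
    (h : Tendsto (fun i => hausdorffEDist (A i ∩ closedBall p R) (B ∩ closedBall p R)) l
      (𝓝 0)) :
    Tendsto (fun i => dR p R (A i) B) l (𝓝 0) := by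
  have hmin : Tendsto (fun i => min 1 (hausdorffEDist (A i ∩ closedBall p R)
      (B ∩ closedBall p R))) l (𝓝 (min 1 0)) := tendsto_const_nhds.min h
  rw [min_eq_right zero_le_one] at hmin
  exact ENNReal.toReal_zero ▸ (ENNReal.tendsto_toReal ENNReal.zero_ne_top).comp hmin

/-- If `C_i → C` in the Chabauty topology, then the set of `R > 0` for which
`d_R(C_i, C)` does not converge to `0` is countable. -/
theorem countable_bad_radii (M : Type*) [MetricSpace M] [ProperSpace M] (p : M)
    (C : ℕ → ClosedSubsets M) (D : ClosedSubsets M)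
    (h : Tendsto C atTop (@nhds _ (Chabauty M) D)) :
    {R : ℝ | 0 < R ∧
      ¬ Tendsto (fun i => dR p R (C i).1 D.1) atTop (nhds 0)}.Countable := by
  refine (countable_setOf_not_subset_closure_preimage_Iio (dist · p) D.1).mono ?_
  rintro R ⟨-, hR⟩ hreg
  exact hR (tendsto_dR_of_tendsto_hausdorffEDist
    (Chabauty.tendsto_hausdorffEDist_inter h (isCompact_closedBall p R) isOpen_ball
      ball_subset_closedBall hreg))
end

section
/- Let C ⊂ M be closed and let L = {x ∈ C : x is not in the closure of C ∩ ball(p, d(p,x))}. Then the set of real numbers {d(x,p) : x ∈ L} is countable. -/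
/-! Every point `x` of `L` is a local minimum of `dist · p` on `L`, since near `x` the points of
`C` lie outside `ball p (dist p x)`. In a second-countable space a function has only countably
many local minimum values on a set: two local minima admitting the same basic neighbourhood
have the same value. -/

open Metric Filter Set Topology

open TopologicalSpace in
theorem countable_image_of_forall_isLocalMinOn {X β : Type*} [TopologicalSpace X]
    [SecondCountableTopology X] [PartialOrder β] {f : X → β} {s : Set X}
    (hmin : ∀ x ∈ s, IsLocalMinOn f s x) : (f '' s).Countable := by
  have hnbhd :
      ∀ x ∈ s, ∃ B ∈ countableBasis X, x ∈ B ∧ ∀ y ∈ s ∩ B, f x ≤ f y := by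
    intro x hx
    obtain ⟨B, ⟨hB, hxB⟩, hBmin⟩ :=
      (nhdsWithin_hasBasis (isBasis_countableBasis X).nhds_hasBasis s).mem_iff.mp (hmin x hx)
    exact ⟨B, hB, hxB, fun y ⟨hys, hyB⟩ => hBmin ⟨hyB, hys⟩⟩
  choose! B hB hxB hBmin using hnbhd
  have hcover : f '' s ⊆ ⋃ b ∈ countableBasis X, f '' {x ∈ s | B x = b} := by
    rintro _ ⟨x, hx, rfl⟩
    exact mem_biUnion (hB x hx) ⟨x, ⟨hx, rfl⟩, rfl⟩
  refine ((countable_countableBasis X).biUnion fun b _ => ?_).mono hcover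
  refine Subsingleton.countable ?_
  rintro _ ⟨x, ⟨hx, rfl⟩, rfl⟩ _ ⟨y, ⟨hy, hxy⟩, rfl⟩
  exact le_antisymm (hBmin x hx y ⟨hy, hxy ▸ hxB y hy⟩)
    (hBmin y hy x ⟨hx, hxy ▸ hxB x hx⟩)

theorem isLocalMinOn_dist_of_notMem_closure_inter_ball {M : Type*} [PseudoMetricSpace M]
    {p x : M} {C s : Set M} (hs : s ⊆ C) (hx : x ∉ closure (C ∩ ball p (dist p x))) :
    IsLocalMinOn (fun y => dist y p) s x := by
  filter_upwards [mem_nhdsWithin_of_mem_nhds (isClosed_closure.isOpen_compl.mem_nhds hx),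
    self_mem_nhdsWithin] with y hy hys
  refine not_lt.mp fun hyx => hy (subset_closure ⟨hs hys, ?_⟩)
  rwa [mem_ball, dist_comm p x]

theorem countable_dist_of_isolated_radii_general (M : Type*) [MetricSpace M] [ProperSpace M]
    (p : M) (C : Set M) :
    ((fun x => dist x p) ''
      {x | x ∈ C ∧ x ∉ closure (C ∩ ball p (dist p x))}).Countable :=
  countable_image_of_forall_isLocalMinOn fun _ hx =>
    isLocalMinOn_dist_of_notMem_closure_inter_ball (fun _ hy => hy.1) hx.2

/-- For a closed set `C` in a proper metric space with basepoint `p`, let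
`L = {x ∈ C | x ∉ closure (C ∩ ball p (d p x))}`. Then `{d(x,p) | x ∈ L}` is countable. -/
theorem countable_dist_of_isolated_radii (M : Type*) [MetricSpace M] [ProperSpace M]
    (p : M) (C : Set M) (hC : IsClosed C) :
    ((fun x => dist x p) ''
      {x | x ∈ C ∧ x ∉ closure (C ∩ ball p (dist p x))}).Countable :=
  countable_dist_of_isolated_radii_general M p C
end

section
/- Let C ⊂ M be closed, let K ⊂ M be compact, and let ε₀ > 0. Then the set of real numbers {d(p,x) : x ∈ C ∩ K and C ∩ ball(p, d(p,x)) ∩ ball(x, ε₀) = ∅} is finite. -/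
open Metric Filter Set Topology

/-!
Two points of the set at different distances from `p` are `ε₀`-apart: the nearer one lies in
`C ∩ ball p (d p x)` for the farther one `x`, hence outside `ball x ε₀`. Choosing one point per
radius thus gives an `ε₀`-separated subset of the compact `K`, which is finite.
-/

theorem TotallyBounded.finite_of_pairwise_le_dist {X : Type*} [PseudoMetricSpace X] {S : Set X}
    (hS : TotallyBounded S) {ε : ℝ} (hε : 0 < ε) (hsep : S.Pairwise fun x y => ε ≤ dist x y) :
    S.Finite := by
  obtain ⟨t, ht, hcover⟩ := Metric.totallyBounded_iff.mp hS (ε / 2) (half_pos hε)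
  have hcenter : ∀ x ∈ S, ∃ c ∈ t, x ∈ ball c (ε / 2) := fun x hx => by
    simpa only [mem_iUnion, exists_prop] using hcover hx
  choose! c hct hxc using hcenter
  refine Finite.of_injOn hct (fun x hx y hy hxy => ?_) ht
  by_contra hne
  have hcx := mem_ball.mp (hxc x hx)
  have hcy := mem_ball'.mp (hxc y hy)
  have hclose : dist x y < ε := calc
    dist x y ≤ dist x (c x) + dist (c y) y := by rw [hxy]; exact dist_triangle _ _ _
    _ < ε := by linarith
  exact (hsep hx hy hne).not_gt hclose

theorem TotallyBounded.finite_image_of_le_dist_of_ne {X β : Type*} [PseudoMetricSpace X]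
    {S : Set X} (hS : TotallyBounded S) {ε : ℝ} (hε : 0 < ε) {f : X → β}
    (hsep : ∀ x ∈ S, ∀ y ∈ S, f x ≠ f y → ε ≤ dist x y) : (f '' S).Finite := by
  obtain ⟨u, huS, hu⟩ := exists_subset_bijOn S f
  rw [← hu.image_eq]
  refine Finite.image f ((hS.subset huS).finite_of_pairwise_le_dist hε ?_)
  exact fun x hx y hy hne => hsep x (huS hx) y (huS hy) (hu.injOn.ne hx hy hne)

theorem le_dist_of_mem_of_inter_ball_eq_empty {X : Type*} [PseudoMetricSpace X] {p x y : X}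
    {C : Set X} {ε : ℝ} (hx : x ∈ C) (hy : C ∩ ball p (dist p y) ∩ ball y ε = ∅)
    (hxy : dist p x < dist p y) : ε ≤ dist x y := by
  by_contra! hlt
  have hmem : x ∈ C ∩ ball p (dist p y) ∩ ball y ε :=
    ⟨⟨hx, by rwa [mem_ball, dist_comm]⟩, mem_ball.mpr hlt⟩
  rw [hy] at hmem
  exact hmem

theorem finite_dist_of_isolated_radii_general (M : Type*) [MetricSpace M]
    (p : M) (C : Set M) (K : Set M) (hK : IsCompact K)
    (ε₀ : ℝ) (hε₀ : 0 < ε₀) :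
    ((fun x => dist p x) ''
      {x | x ∈ C ∩ K ∧ C ∩ ball p (dist p x) ∩ ball x ε₀ = ∅}).Finite := by
  refine (hK.totallyBounded.subset fun x hx => hx.1.2).finite_image_of_le_dist_of_ne hε₀ ?_
  rintro x ⟨⟨hxC, -⟩, hx⟩ y ⟨⟨hyC, -⟩, hy⟩ hne
  rcases hne.lt_or_gt with hlt | hgt
  · exact le_dist_of_mem_of_inter_ball_eq_empty hxC hy hlt
  · rw [dist_comm]
    exact le_dist_of_mem_of_inter_ball_eq_empty hyC hx hgt

/-- For a closed set `C`, a compact set `K`, and `ε₀ > 0` in a proper metric space with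
basepoint `p`, the set of values `d(p,x)` for `x ∈ C ∩ K` with
`C ∩ ball p (d p x) ∩ ball x ε₀ = ∅` is finite. -/
theorem finite_dist_of_isolated_radii (M : Type*) [MetricSpace M] [ProperSpace M]
    (p : M) (C : Set M) (hC : IsClosed C) (K : Set M) (hK : IsCompact K)
    (ε₀ : ℝ) (hε₀ : 0 < ε₀) :
    ((fun x => dist p x) ''
      {x | x ∈ C ∩ K ∧ C ∩ ball p (dist p x) ∩ ball x ε₀ = ∅}).Finite :=
  finite_dist_of_isolated_radii_general M p C K hK ε₀ hε₀
end

section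
/- Suppose x_i → x is a convergent sequence of points in M with d(x,p) = R and d(x_i,p) > R for all i. Then the singletons {x_i} converge to the singleton {x} in the Chabauty topology on C(M), while d_R({x_i}, {x}) = 1 for all i; in particular the family of pseudo-metrics {d_R : R > 0} does not determine the Chabauty topology. -/
open Metric Filter Set Topology

theorem continuous_singleton_chabauty (M : Type*) [MetricSpace M] :
    @Continuous M (ClosedSubsets M) _ (Chabauty M)
      (fun y => (⟨{y}, isClosed_singleton⟩ : ClosedSubsets M)) := by
  rw [Chabauty, continuous_generateFrom_iff]
  rintro S (⟨K, hK, rfl⟩ | ⟨U, hU, rfl⟩)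
  · simp only [preimage_ofPred_eq, singleton_inter_eq_empty]
    exact hK.isClosed.isOpen_compl
  · simp only [preimage_ofPred_eq, singleton_inter_nonempty]
    exact hU

theorem dR_eq_one_of_inter_closedBall_eq_empty {M : Type*} [MetricSpace M] {p : M} {R : ℝ}
    {A B : Set M} (hA : A ∩ closedBall p R = ∅) (hB : (B ∩ closedBall p R).Nonempty) :
    dR p R A B = 1 := by
  rw [dR, hA, EMetric.hausdorffEdist, hausdorffEDist_comm, hausdorffEDist_empty hB]
  simp

theorem singletons_chabauty_but_not_dR_general (M : Type*) [MetricSpace M] (p : M)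
    (R : ℝ) (x : ℕ → M) (y : M)
    (hconv : Tendsto x atTop (nhds y)) (hy : dist y p = R)
    (hx : ∀ i, R < dist (x i) p) :
    Tendsto (fun i => (⟨{x i}, isClosed_singleton⟩ : ClosedSubsets M)) atTop
      (@nhds _ (Chabauty M) ⟨{y}, isClosed_singleton⟩) ∧
    ∀ i, dR p R {x i} {y} = 1 := by
  let _ : TopologicalSpace (ClosedSubsets M) := Chabauty M
  refine ⟨((continuous_singleton_chabauty M).tendsto y).comp hconv, fun i => ?_⟩
  apply dR_eq_one_of_inter_closedBall_eq_empty
  · rw [singleton_inter_eq_empty, mem_closedBall, not_le]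
    exact hx i
  · rw [singleton_inter_nonempty, mem_closedBall]
    exact hy.le

/-- If `x_i → x` with `d(x,p) = R` and `d(x_i,p) > R` for all `i`, then the singletons
`{x_i}` converge to `{x}` in the Chabauty topology, while `d_R({x_i},{x}) = 1` for all `i`;
so the family of pseudo-metrics `{d_R | R > 0}` does not determine the Chabauty topology. -/
theorem singletons_chabauty_but_not_dR (M : Type*) [MetricSpace M] [ProperSpace M] (p : M)
    (R : ℝ) (hR : 0 < R) (x : ℕ → M) (y : M)
    (hconv : Tendsto x atTop (nhds y)) (hy : dist y p = R)
    (hx : ∀ i, R < dist (x i) p) :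
    Tendsto (fun i => (⟨{x i}, isClosed_singleton⟩ : ClosedSubsets M)) atTop
      (@nhds _ (Chabauty M) ⟨{y}, isClosed_singleton⟩) ∧
    ∀ i, dR p R {x i} {y} = 1 :=
  singletons_chabauty_but_not_dR_general M p R x y hconv hy hx
end
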